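/- arXiv:2411.11301 — 2 statements merged into one kernel-verified Lean document; each statement's English description precedes it below -/
import Mathlib

section
/- With V as in the previous context, the eigenvalues of V are exactly λ₀ = σ_e² with multiplicity 2N·n·(N₁−1), λ₁ = σ_e² + N₁σ₁² with multiplicity 2N·(n−1), λ₂ = σ_e² + N₁σ₁² + nN₁σ₂² with multiplicity N, and λ₃ = σ_e² + N₁σ₁² + nN₁σ₂² + 2nN₁σ₃² with multiplicity N (where the total size is 2N·n·N₁). Equivalently, V = λ₀ P₀ + λ₁ P₁ + λ₂ P₂ + λ₃ P₃ for the orthogonal projections Pᵢ defined earlier. -/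
open Matrix
open scoped Kronecker
noncomputable def Jmat (a : ℕ) : Matrix (Fin a) (Fin a) ℝ := fun _ _ => 1

noncomputable def Jbar (a : ℕ) : Matrix (Fin a) (Fin a) ℝ := (a : ℝ)⁻¹ • Jmat a

noncomputable def Cmat (a : ℕ) : Matrix (Fin a) (Fin a) ℝ :=
  (1 : Matrix (Fin a) (Fin a) ℝ) - Jbar a

noncomputable def Pmat (N n N₁ : ℕ) :
    Fin 4 → Matrix (((Fin N × Fin 2) × Fin n) × Fin N₁) (((Fin N × Fin 2) × Fin n) × Fin N₁) ℝ
  | 0 => (((1 : Matrix (Fin N) (Fin N) ℝ) ⊗ₖ (1 : Matrix (Fin 2) (Fin 2) ℝ)) ⊗ₖ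
            (1 : Matrix (Fin n) (Fin n) ℝ)) ⊗ₖ Cmat N₁
  | 1 => (((1 : Matrix (Fin N) (Fin N) ℝ) ⊗ₖ (1 : Matrix (Fin 2) (Fin 2) ℝ)) ⊗ₖ
            Cmat n) ⊗ₖ Jbar N₁
  | 2 => (((1 : Matrix (Fin N) (Fin N) ℝ) ⊗ₖ Cmat 2) ⊗ₖ Jbar n) ⊗ₖ Jbar N₁
  | 3 => (((1 : Matrix (Fin N) (Fin N) ℝ) ⊗ₖ Jbar 2) ⊗ₖ Jbar n) ⊗ₖ Jbar N₁

noncomputable def Vmat (N n N₁ : ℕ) (σe2 σ12 σ22 σ32 : ℝ) :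
    Matrix (((Fin N × Fin 2) × Fin n) × Fin N₁) (((Fin N × Fin 2) × Fin n) × Fin N₁) ℝ :=
  σe2 • ((((1 : Matrix (Fin N) (Fin N) ℝ) ⊗ₖ (1 : Matrix (Fin 2) (Fin 2) ℝ)) ⊗ₖ
            (1 : Matrix (Fin n) (Fin n) ℝ)) ⊗ₖ (1 : Matrix (Fin N₁) (Fin N₁) ℝ))
  + σ32 • ((((1 : Matrix (Fin N) (Fin N) ℝ) ⊗ₖ Jmat 2) ⊗ₖ Jmat n) ⊗ₖ Jmat N₁)
  + σ22 • ((((1 : Matrix (Fin N) (Fin N) ℝ) ⊗ₖ (1 : Matrix (Fin 2) (Fin 2) ℝ)) ⊗ₖ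
            Jmat n) ⊗ₖ Jmat N₁)
  + σ12 • ((((1 : Matrix (Fin N) (Fin N) ℝ) ⊗ₖ (1 : Matrix (Fin 2) (Fin 2) ℝ)) ⊗ₖ
            (1 : Matrix (Fin n) (Fin n) ℝ)) ⊗ₖ Jmat N₁)

/-!
Since `C + J̄ = I`, the partial sums `P₂ + P₃`, `P₁ + P₂ + P₃` and `P₀ + ⋯ + P₃` are the
Kronecker products `I⊗I⊗J̄⊗J̄`, `I⊗I⊗I⊗J̄` and `I⊗I⊗I⊗I`, while `P₃ = I⊗J̄⊗J̄⊗J̄`. Writing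
`J_a = a J̄_a`, each term of `V` is a multiple of one of these four, and collecting coefficients
gives the `λᵢ`. The multiplicities are the traces, from `tr C_a = a - 1`, `tr J̄_a = 1` and
`tr (A ⊗ B) = tr A · tr B`.
-/

lemma Jmat_eq_smul_Jbar (a : ℕ) : Jmat a = (a : ℝ) • Jbar a := by
  ext i j
  have ha : (a : ℝ) ≠ 0 := Nat.cast_ne_zero.2 i.pos.ne'
  simp [Jbar, Jmat, ha]

lemma Cmat_add_Jbar (a : ℕ) : Cmat a + Jbar a = 1 := sub_add_cancel _ _

lemma trace_Jbar (a : ℕ) [NeZero a] : (Jbar a).trace = 1 := by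
  simp [Jbar, Jmat, trace, NeZero.ne]

lemma trace_Cmat (a : ℕ) [NeZero a] : (Cmat a).trace = (a : ℝ) - 1 := by
  simp [Cmat, trace_sub, trace_Jbar]

lemma Pmat_two_add_three (N n N₁ : ℕ) :
    Pmat N n N₁ 2 + Pmat N n N₁ 3 =
      ((1 ⊗ₖ (1 : Matrix (Fin 2) (Fin 2) ℝ)) ⊗ₖ Jbar n) ⊗ₖ Jbar N₁ := by
  rw [Pmat, Pmat, ← add_kronecker, ← add_kronecker, ← kronecker_add, Cmat_add_Jbar]

lemma Pmat_one_add_two_add_three (N n N₁ : ℕ) :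
    Pmat N n N₁ 1 + Pmat N n N₁ 2 + Pmat N n N₁ 3 =
      ((1 ⊗ₖ (1 : Matrix (Fin 2) (Fin 2) ℝ)) ⊗ₖ (1 : Matrix (Fin n) (Fin n) ℝ)) ⊗ₖ Jbar N₁ := by
  rw [add_assoc, Pmat_two_add_three, Pmat, ← add_kronecker, ← kronecker_add, Cmat_add_Jbar]

lemma sum_Pmat (N n N₁ : ℕ) :
    Pmat N n N₁ 0 + Pmat N n N₁ 1 + Pmat N n N₁ 2 + Pmat N n N₁ 3 =
      ((1 ⊗ₖ (1 : Matrix (Fin 2) (Fin 2) ℝ)) ⊗ₖ (1 : Matrix (Fin n) (Fin n) ℝ)) ⊗ₖ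
        (1 : Matrix (Fin N₁) (Fin N₁) ℝ) := by
  rw [add_assoc, add_assoc, ← add_assoc (Pmat N n N₁ 1), Pmat_one_add_two_add_three, Pmat,
    ← kronecker_add, Cmat_add_Jbar]

lemma Vmat_eq_sum_smul_Pmat (N n N₁ : ℕ) (σe2 σ12 σ22 σ32 : ℝ) :
    Vmat N n N₁ σe2 σ12 σ22 σ32 =
      σe2 • Pmat N n N₁ 0 + (σe2 + N₁ * σ12) • Pmat N n N₁ 1
        + (σe2 + N₁ * σ12 + n * N₁ * σ22) • Pmat N n N₁ 2
        + (σe2 + N₁ * σ12 + n * N₁ * σ22 + 2 * n * N₁ * σ32) • Pmat N n N₁ 3 := by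
  simp only [Vmat, Jmat_eq_smul_Jbar, kronecker_smul, smul_kronecker, smul_smul]
  rw [← sum_Pmat, ← Pmat_one_add_two_add_three, ← Pmat_two_add_three]
  simp only [Pmat]
  module

theorem V_eigen_decomposition_general (N n N₁ : ℕ) (hn : 0 < n) (hN₁ : 0 < N₁)
    (σe2 σ12 σ22 σ32 : ℝ)
    (l0 l1 l2 l3 : ℝ)
    (hl0 : l0 = σe2) (hl1 : l1 = σe2 + N₁ * σ12)
    (hl2 : l2 = σe2 + N₁ * σ12 + n * N₁ * σ22)
    (hl3 : l3 = σe2 + N₁ * σ12 + n * N₁ * σ22 + 2 * n * N₁ * σ32) :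
    Vmat N n N₁ σe2 σ12 σ22 σ32 =
      l0 • Pmat N n N₁ 0 + l1 • Pmat N n N₁ 1 + l2 • Pmat N n N₁ 2 + l3 • Pmat N n N₁ 3 ∧
    (Pmat N n N₁ 0).trace = 2 * N * n * ((N₁ : ℝ) - 1) ∧
    (Pmat N n N₁ 1).trace = 2 * N * ((n : ℝ) - 1) ∧
    (Pmat N n N₁ 2).trace = (N : ℝ) ∧
    (Pmat N n N₁ 3).trace = (N : ℝ) := by
  subst hl0 hl1 hl2 hl3
  have := NeZero.of_pos hn
  have := NeZero.of_pos hN₁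
  refine ⟨Vmat_eq_sum_smul_Pmat .., ?_, ?_, ?_, ?_⟩ <;>
    simp only [Pmat, trace_kronecker, trace_one, trace_Cmat, trace_Jbar, Fintype.card_fin] <;>
    push_cast <;> ring

/-- Spectral decomposition of `V`: `V = λ₀P₀ + λ₁P₁ + λ₂P₂ + λ₃P₃` for the
orthogonal projections `Pᵢ`, whose ranks (traces) give the multiplicities
`2N·n·(N₁−1)`, `2N·(n−1)`, `N`, `N` of the eigenvalues `λ₀, λ₁, λ₂, λ₃`. -/
theorem V_eigen_decomposition (N n N₁ : ℕ) (hN : 0 < N) (hn : 0 < n) (hN₁ : 0 < N₁)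
    (σe2 σ12 σ22 σ32 : ℝ) (hσe : 0 < σe2) (h1 : 0 ≤ σ12) (h2 : 0 ≤ σ22) (h3 : 0 ≤ σ32)
    (l0 l1 l2 l3 : ℝ)
    (hl0 : l0 = σe2) (hl1 : l1 = σe2 + N₁ * σ12)
    (hl2 : l2 = σe2 + N₁ * σ12 + n * N₁ * σ22)
    (hl3 : l3 = σe2 + N₁ * σ12 + n * N₁ * σ22 + 2 * n * N₁ * σ32) :
    Vmat N n N₁ σe2 σ12 σ22 σ32 =
      l0 • Pmat N n N₁ 0 + l1 • Pmat N n N₁ 1 + l2 • Pmat N n N₁ 2 + l3 • Pmat N n N₁ 3 ∧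
    (Pmat N n N₁ 0).trace = 2 * N * n * ((N₁ : ℝ) - 1) ∧
    (Pmat N n N₁ 1).trace = 2 * N * ((n : ℝ) - 1) ∧
    (Pmat N n N₁ 2).trace = (N : ℝ) ∧
    (Pmat N n N₁ 3).trace = (N : ℝ) :=
  V_eigen_decomposition_general N n N₁ hn hN₁ σe2 σ12 σ22 σ32 l0 l1 l2 l3 hl0 hl1 hl2 hl3
end

section
/- With V and λᵢ as above and Z₁ = I_N ⊗ 1_2 ⊗ 1_n ⊗ 1_{N₁}, the trace of V⁻¹ Z₁ Z₁ᵀ equals (1/λ₃) · N · 2n N₁. -/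
open Matrix
open scoped Kronecker

/-- The all-ones column vector `1_a`, as an `a × 1` matrix. -/
noncomputable def onesCol (a : ℕ) : Matrix (Fin a) (Fin 1) ℝ := fun _ _ => 1

/-- The design matrix `Z₁ = I_N ⊗ 1_2 ⊗ 1_n ⊗ 1_{N₁}`. -/
noncomputable def Z1 (N n N₁ : ℕ) :
    Matrix (((Fin N × Fin 2) × Fin n) × Fin N₁) (((Fin N × Fin 1) × Fin 1) × Fin 1) ℝ :=
  (((1 : Matrix (Fin N) (Fin N) ℝ) ⊗ₖ onesCol 2) ⊗ₖ onesCol n) ⊗ₖ onesCol N₁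

/-!
The columns of `Z₁ Z₁ᵀ = I_N ⊗ J_2 ⊗ J_n ⊗ J_{N₁}` are eigenvectors of `V` with eigenvalue `λ₃`,
because `J_a J_a = a J_a`. Hence `V⁻¹ Z₁ Z₁ᵀ = λ₃⁻¹ Z₁ Z₁ᵀ`, whose trace is `λ₃⁻¹ · N · 2nN₁`.
`V` is invertible since it is `σₑ² I` plus a nonnegative combination of Kronecker products of
identities and all-ones matrices, all positive semidefinite.
-/

lemma onesCol_mul_transpose (a : ℕ) : onesCol a * (onesCol a)ᵀ = Jmat a := by
  ext i j; simp [Matrix.mul_apply, onesCol, Jmat]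

lemma Jmat_mul_Jmat (a : ℕ) : Jmat a * Jmat a = (a : ℝ) • Jmat a := by
  ext i j; simp [Matrix.mul_apply, Jmat]

lemma trace_Jmat (a : ℕ) : (Jmat a).trace = a := by
  simp [Matrix.trace, Jmat]

lemma posSemidef_Jmat (a : ℕ) : (Jmat a).PosSemidef := by
  simpa [← onesCol_mul_transpose] using posSemidef_self_mul_conjTranspose (onesCol a)

lemma Matrix.inv_mul_eq_inv_smul_of_mul_eq_smul {m K : Type*} [Fintype m] [DecidableEq m]
    [Field K] {A B : Matrix m m K} {c : K} (hA : IsUnit A) (h : A * B = c • B) :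
    A⁻¹ * B = c⁻¹ • B := by
  have hcB : c • (A⁻¹ * B) = B := by
    rw [← Matrix.mul_smul, ← h, ← Matrix.mul_assoc,
      nonsing_inv_mul _ ((isUnit_iff_isUnit_det A).mp hA), Matrix.one_mul]
  rcases eq_or_ne c 0 with rfl | hc
  · obtain rfl : B = 0 := by rw [← hcB, zero_smul]
    simp
  · calc A⁻¹ * B = c⁻¹ • c • (A⁻¹ * B) := by rw [smul_smul, inv_mul_cancel₀ hc, one_smul]
      _ = c⁻¹ • B := by rw [hcB]

section CRT

variable {N n N₁ : ℕ} {σe2 σ12 σ22 σ32 : ℝ}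

lemma Z1_mul_transpose :
    Z1 N n N₁ * (Z1 N n N₁)ᵀ =
      (((1 : Matrix (Fin N) (Fin N) ℝ) ⊗ₖ Jmat 2) ⊗ₖ Jmat n) ⊗ₖ Jmat N₁ := by
  simp only [Z1, ← kroneckerMap_transpose, transpose_one, ← mul_kronecker_mul, Matrix.one_mul,
    onesCol_mul_transpose]

lemma Vmat_mul_Z1_mul_transpose :
    Vmat N n N₁ σe2 σ12 σ22 σ32 * (Z1 N n N₁ * (Z1 N n N₁)ᵀ) =
      (σe2 + N₁ * σ12 + n * N₁ * σ22 + 2 * n * N₁ * σ32) • (Z1 N n N₁ * (Z1 N n N₁)ᵀ) := by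
  simp only [Z1_mul_transpose, Vmat, Matrix.add_mul, Matrix.smul_mul, ← mul_kronecker_mul,
    Matrix.one_mul, Jmat_mul_Jmat, kronecker_smul, smul_kronecker]
  push_cast
  module

lemma posDef_Vmat (hσe : 0 < σe2) (h1 : 0 ≤ σ12) (h2 : 0 ≤ σ22) (h3 : 0 ≤ σ32) :
    (Vmat N n N₁ σe2 σ12 σ22 σ32).PosDef := by
  rw [Vmat, one_kronecker_one, one_kronecker_one, one_kronecker_one]
  refine (((PosDef.one.smul hσe).add_posSemidef (PosSemidef.smul ?_ h3)).add_posSemidef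
    (PosSemidef.smul ?_ h2)).add_posSemidef (PosSemidef.smul ?_ h1) <;>
  repeat' first
    | exact posSemidef_Jmat _
    | exact PosSemidef.one
    | apply PosSemidef.kronecker

end CRT

theorem trace_Vinv_Z1_general (N n N₁ : ℕ)
    (σe2 σ12 σ22 σ32 : ℝ) (hσe : 0 < σe2) (h1 : 0 ≤ σ12) (h2 : 0 ≤ σ22) (h3 : 0 ≤ σ32)
    (l3 : ℝ) (hl3 : l3 = σe2 + N₁ * σ12 + n * N₁ * σ22 + 2 * n * N₁ * σ32) :
    ((Vmat N n N₁ σe2 σ12 σ22 σ32)⁻¹ * (Z1 N n N₁ * (Z1 N n N₁)ᵀ)).trace =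
      (1 / l3) * N * (2 * n * N₁) := by
  rw [inv_mul_eq_inv_smul_of_mul_eq_smul (posDef_Vmat hσe h1 h2 h3).isUnit
    Vmat_mul_Z1_mul_transpose, ← hl3, trace_smul, Z1_mul_transpose, trace_kronecker,
    trace_kronecker, trace_kronecker, trace_one, trace_Jmat, trace_Jmat, trace_Jmat,
    Fintype.card_fin, smul_eq_mul]
  push_cast
  ring

/-- `tr(V⁻¹ Z₁ Z₁ᵀ) = (1/λ₃) · N · 2nN₁`. -/
theorem trace_Vinv_Z1 (N n N₁ : ℕ) (hN : 0 < N) (hn : 0 < n) (hN₁ : 0 < N₁)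
    (σe2 σ12 σ22 σ32 : ℝ) (hσe : 0 < σe2) (h1 : 0 ≤ σ12) (h2 : 0 ≤ σ22) (h3 : 0 ≤ σ32)
    (l3 : ℝ) (hl3 : l3 = σe2 + N₁ * σ12 + n * N₁ * σ22 + 2 * n * N₁ * σ32) :
    ((Vmat N n N₁ σe2 σ12 σ22 σ32)⁻¹ * (Z1 N n N₁ * (Z1 N n N₁)ᵀ)).trace =
      (1 / l3) * N * (2 * n * N₁) :=
  trace_Vinv_Z1_general N n N₁ σe2 σ12 σ22 σ32 hσe h1 h2 h3 l3 hl3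
end
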